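/- arXiv:2408.15313 — 2 statements merged into one kernel-verified Lean document; each statement's English description precedes it below -/
import Mathlib

section
/- Let S be a finite set, π, π_ref probability distributions on S with π_ref full support, τ > 0, and g : S → ℝ. Define L(π) = E_{y,y'∼π⊗π}[(h_π(y,y') − (g(y)−g(y'))/τ)²] with h_π(y,y') = log(π(y)π_ref(y')/(π(y')π_ref(y))). Then L(π) ≥ 0 with equality if and only if there exists a constant c ∈ ℝ such that log(π(y)/π_ref(y)) = g(y)/τ + c for all y in the support of π with π having support equal to S; in particular L(π*) = 0 for π*(y) = π_ref(y)exp(g(y)/τ)/Σ_{y'} π_ref(y')exp(g(y')/τ). -/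
/-- With `h_π (y,y') = log (π y · π_ref y' / (π y' · π_ref y))` and
`L π = E_{y,y'∼π⊗π}[(h_π (y,y') − (g y − g y')/τ)²]`, we have `L π ≥ 0`, with
equality iff there is a constant `c` with `log (π y / π_ref y) = g y / τ + c` for
all `y` in the support of `π`; in particular `L π* = 0` for the Gibbs policy
`π* (y) = π_ref y · exp (g y / τ) / Σ_{y'} π_ref y' · exp (g y' / τ)`. -/
theorem bfpo_stmt12 {S : Type*} [Fintype S] [Nonempty S]
    (πref : S → ℝ) (hrefpos : ∀ y, 0 < πref y) (href1 : ∑ y, πref y = 1)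
    (τ : ℝ) (hτ : 0 < τ) (g : S → ℝ)
    (L : (S → ℝ) → ℝ)
    (hL : ∀ p : S → ℝ, L p = ∑ y, ∑ y', p y * p y' *
      (Real.log (p y * πref y' / (p y' * πref y)) - (g y - g y') / τ) ^ 2)
    (πstar : S → ℝ)
    (hπstar : ∀ y, πstar y =
      πref y * Real.exp (g y / τ) / ∑ y', πref y' * Real.exp (g y' / τ)) :
    (∀ π : S → ℝ, (∀ y, 0 ≤ π y) → (∑ y, π y) = 1 →
      0 ≤ L π ∧
      (L π = 0 ↔ ∃ c : ℝ, ∀ y, 0 < π y →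
        Real.log (π y / πref y) = g y / τ + c)) ∧
    L πstar = 0 := by
  have key : ∀ (a b c d : ℝ), 0 < a → 0 < b → 0 < c → 0 < d →
      Real.log (a * d / (b * c)) = Real.log (a / c) - Real.log (b / d) := by
    intro a b c d ha hb hc hd
    rw [Real.log_div (by positivity) (by positivity), Real.log_mul ha.ne' hd.ne',
      Real.log_mul hb.ne' hc.ne', Real.log_div ha.ne' hc.ne', Real.log_div hb.ne' hd.ne']
    ring
  have main : ∀ π : S → ℝ, (∀ y, 0 ≤ π y) → (∑ y, π y) = 1 →
      0 ≤ L π ∧ (L π = 0 ↔ ∃ c : ℝ, ∀ y, 0 < π y →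
        Real.log (π y / πref y) = g y / τ + c) := by
    intro π hpos hsum
    have hterm : ∀ y y' : S, 0 ≤ π y * π y' *
        (Real.log (π y * πref y' / (π y' * πref y)) - (g y - g y') / τ) ^ 2 :=
      fun y y' => mul_nonneg (mul_nonneg (hpos y) (hpos y')) (sq_nonneg _)
    have hLnn : 0 ≤ L π := by
      rw [hL]
      exact Finset.sum_nonneg fun y _ => Finset.sum_nonneg fun y' _ => hterm y y'
    refine ⟨hLnn, ?_, ?_⟩
    · intro h0
      obtain ⟨y0, hy0⟩ : ∃ y0, 0 < π y0 := by
        by_contra hc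
        push_neg at hc
        have hz : ∀ y, π y = 0 := fun y => le_antisymm (hc y) (hpos y)
        simp [hz] at hsum
      have hsum0 : (∑ y, ∑ y', π y * π y' *
          (Real.log (π y * πref y' / (π y' * πref y)) - (g y - g y') / τ) ^ 2) = 0 := by
        rw [← hL]; exact h0
      have h1 := (Finset.sum_eq_zero_iff_of_nonneg
        (fun y _ => Finset.sum_nonneg fun y' _ => hterm y y')).mp hsum0
      refine ⟨Real.log (π y0 / πref y0) - g y0 / τ, fun y hy => ?_⟩
      have h2 := (Finset.sum_eq_zero_iff_of_nonneg
        (fun y' _ => hterm y y')).mp (h1 y (Finset.mem_univ y)) y0 (Finset.mem_univ y0)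
      have hne : π y * π y0 ≠ 0 := by positivity
      have hsq : (Real.log (π y * πref y0 / (π y0 * πref y)) - (g y - g y0) / τ) ^ 2 = 0 := by
        rcases mul_eq_zero.mp h2 with h | h
        · exact absurd h hne
        · exact h
      have hlog : Real.log (π y * πref y0 / (π y0 * πref y)) = (g y - g y0) / τ := by
        have := pow_eq_zero_iff (n := 2) (by norm_num) |>.mp hsq
        linarith [sub_eq_zero.mp this]
      rw [key (π y) (π y0) (πref y) (πref y0) hy hy0 (hrefpos y) (hrefpos y0),
        sub_div] at hlog
      linarith
    · rintro ⟨c, hc⟩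
      rw [hL]
      refine Finset.sum_eq_zero fun y _ => Finset.sum_eq_zero fun y' _ => ?_
      rcases eq_or_lt_of_le (hpos y) with h | h
      · rw [← h]; ring
      rcases eq_or_lt_of_le (hpos y') with h' | h'
      · rw [← h']; ring
      have : Real.log (π y * πref y' / (π y' * πref y)) - (g y - g y') / τ = 0 := by
        rw [key (π y) (π y') (πref y) (πref y') h h' (hrefpos y) (hrefpos y'),
          hc y h, hc y' h', sub_div]
        ring
      rw [this]; ring
  set Z : ℝ := ∑ y', πref y' * Real.exp (g y' / τ) with hZdef
  have hZ : 0 < Z := Finset.sum_pos (fun y _ => mul_pos (hrefpos y) (Real.exp_pos _)) Finset.univ_nonempty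
  have hstarpos : ∀ y, 0 < πstar y := fun y => by rw [hπstar y]; exact div_pos (mul_pos (hrefpos y) (Real.exp_pos _)) hZ
  have hstarsum : ∑ y, πstar y = 1 := by
    have : ∑ y, πstar y = (∑ y, πref y * Real.exp (g y / τ)) / Z := by
      rw [Finset.sum_div]
      exact Finset.sum_congr rfl fun y _ => hπstar y
    rw [this, ← hZdef, div_self hZ.ne']
  refine ⟨main, ?_⟩
  refine (main πstar (fun y => (hstarpos y).le) hstarsum).2.mpr ⟨-Real.log Z, fun y _ => ?_⟩
  have hq : πstar y / πref y = Real.exp (g y / τ) / Z := by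
    rw [hπstar y, div_div, mul_comm Z (πref y), ← div_div,
      mul_div_cancel_left₀ _ (hrefpos y).ne']
  rw [hq, Real.log_div (Real.exp_pos _).ne' hZ.ne', Real.log_exp]
  ring
end

section
/- Let S be a finite set, π_ref a full-support distribution on S, g : S → ℝ, τ > 0. The optimization problem min over full-support distributions π of E_{y,y'∼π⊗π}[(h_π(y,y') − (g(y)−g(y'))/τ)²] has π*(y) ∝ π_ref(y)·exp(g(y)/τ) as its unique global minimizer among full-support distributions, and no other local minima exist. -/
/-!
With `c = log π_ref + g / τ` and `u = log π - c`, the loss is `2 Var_π(u)`; it vanishes exactly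
when `u` is constant, i.e. when `π = π*`. At a local minimum `π`, shift `c` so that `E_π u = 0`
and vary `π` along `π (1 + t h)` with `E_π h = 0`. The first variation forces `u² + 2u` to be
constant; on that level set the second variation along `h = u` equals
`-2 E_π u² - 2 (E_π u²)²`, which is nonnegative only if `u = 0`.
-/

section

open Finset Filter Topology Real

theorem IsLocalMin.nonneg_of_hasDerivAt_of_hasDerivAt {f f' : ℝ → ℝ} {x a : ℝ}
    (hmin : IsLocalMin f x) (hf : ∀ᶠ t in 𝓝 x, HasDerivAt f (f' t) t)
    (hf' : HasDerivAt f' a x) : 0 ≤ a := by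
  by_contra! ha
  have hderiv : deriv f =ᶠ[𝓝 x] f' := hf.mono fun t ht => ht.deriv
  have hmax : IsLocalMax f x :=
    isLocalMax_of_deriv_deriv_neg (by rwa [hderiv.deriv_eq, hf'.deriv])
      (hderiv.eq_of_nhds.trans (hmin.hasDerivAt_eq_zero hf.self_of_nhds))
      hf.self_of_nhds.continuousAt
  -- a local minimum that is also a local maximum is locally constant
  have hconst : deriv f =ᶠ[𝓝 x] fun _ => 0 := by
    have hfx : f =ᶠ[𝓝 x] fun _ => f x :=
      (hmin.and hmax).mono fun t ht => le_antisymm ht.2 ht.1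
    filter_upwards [hfx.eventuallyEq_nhds] with t ht
    rw [ht.deriv_eq, deriv_const]
  have : deriv (deriv f) x = 0 := by
    rw [hconst.deriv_eq, deriv_const]
  rw [hderiv.deriv_eq, hf'.deriv] at this
  exact ha.ne this

variable {S : Type*} [Fintype S]

theorem sum_sum_mul_mul_sub_sq {p : S → ℝ} (hp : ∑ y, p y = 1) (u : S → ℝ) :
    ∑ y, ∑ y', p y * p y' * (u y - u y') ^ 2
      = 2 * (∑ y, p y * u y ^ 2 - (∑ y, p y * u y) ^ 2) := by
  have hexp : ∀ y y', p y * p y' * (u y - u y') ^ 2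
      = p y * u y ^ 2 * p y' + p y * (p y' * u y' ^ 2) - 2 * (p y * u y) * (p y' * u y') :=
    fun y y' => by ring
  simp only [hexp, sum_add_distrib, sum_sub_distrib, ← mul_sum, ← sum_mul, hp]
  ring

theorem eq_zero_of_sum_mul_sq_eq_zero {p f : S → ℝ} (hp : ∀ y, 0 < p y)
    (h : ∑ y, p y * f y ^ 2 = 0) (y : S) : f y = 0 := by
  have := (sum_eq_zero_iff_of_nonneg fun y _ => mul_nonneg (hp y).le (sq_nonneg (f y))).1 h y
    (mem_univ y)
  simpa [(hp y).ne'] using this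

def posSimplex (S : Type*) [Fintype S] : Set (S → ℝ) := {p | (∀ y, 0 < p y) ∧ ∑ y, p y = 1}

noncomputable def residualLoss (c p : S → ℝ) : ℝ :=
  ∑ y, ∑ y', p y * p y' * ((log (p y) - c y) - (log (p y') - c y')) ^ 2

theorem residualLoss_add_const (c : S → ℝ) (k : ℝ) :
    residualLoss (fun y => c y + k) = residualLoss c := by
  funext p
  simp only [residualLoss, sub_add_eq_sub_sub, sub_sub_sub_cancel_right]

theorem residualLoss_nonneg (c : S → ℝ) {p : S → ℝ} (hp : ∀ y, 0 ≤ p y) :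
    0 ≤ residualLoss c p :=
  sum_nonneg fun y _ => sum_nonneg fun y' _ => by have := hp y; have := hp y'; positivity

theorem residualLoss_eq_zero_iff (c : S → ℝ) {p : S → ℝ} (hp : ∀ y, 0 < p y) :
    residualLoss c p = 0 ↔ ∀ y y', log (p y) - c y = log (p y') - c y' := by
  have hterm : ∀ y y', 0 ≤ p y * p y' * ((log (p y) - c y) - (log (p y') - c y')) ^ 2 :=
    fun y y' => by have := hp y; have := hp y'; positivity
  simp only [residualLoss, sum_eq_zero_iff_of_nonneg fun y _ => sum_nonneg fun y' _ => hterm y y',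
    sum_eq_zero_iff_of_nonneg fun y' _ => hterm _ y', mem_univ, true_implies, mul_eq_zero,
    (hp _).ne', false_or, pow_eq_zero_iff two_ne_zero, sub_eq_zero]

theorem eq_of_log_sub_eq {c p q : S → ℝ} (hp : p ∈ posSimplex S) (hq : q ∈ posSimplex S)
    (hpc : ∀ y y', log (p y) - c y = log (p y') - c y')
    (hqc : ∀ y y', log (q y) - c y = log (q y') - c y') : p = q := by
  have hcross : ∀ y y', p y * q y' = p y' * q y := by
    intro y y'
    rw [← exp_log (hp.1 y), ← exp_log (hq.1 y'), ← exp_log (hp.1 y'), ← exp_log (hq.1 y),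
      ← exp_add, ← exp_add]
    congr 1
    linarith [hpc y y', hqc y y']
  funext y
  calc p y = ∑ y', p y * q y' := by rw [← mul_sum, hq.2, mul_one]
    _ = ∑ y', p y' * q y := sum_congr rfl fun y' _ => hcross y y'
    _ = q y := by rw [← sum_mul, hp.2, one_mul]

noncomputable def gibbs (c : S → ℝ) (y : S) : ℝ := exp (c y) / ∑ y', exp (c y')

theorem gibbs_mem_posSimplex [Nonempty S] (c : S → ℝ) : gibbs c ∈ posSimplex S := by
  have hZ : 0 < ∑ y', exp (c y') := sum_pos (fun y _ => exp_pos (c y)) univ_nonempty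
  refine ⟨fun y => div_pos (exp_pos (c y)) hZ, ?_⟩
  simp only [gibbs, ← sum_div, div_self hZ.ne']

theorem log_gibbs_sub [Nonempty S] (c : S → ℝ) (y : S) :
    log (gibbs c y) - c y = -log (∑ y', exp (c y')) := by
  have hZ : 0 < ∑ y', exp (c y') := sum_pos (fun y _ => exp_pos (c y)) univ_nonempty
  rw [gibbs, log_div (exp_pos (c y)).ne' hZ.ne', log_exp]
  ring

theorem eventually_forall_pos_add_mul {p : S → ℝ} (hp : ∀ y, 0 < p y) (w : S → ℝ) :
    ∀ᶠ t in 𝓝 (0 : ℝ), ∀ y, 0 < p y + t * w y :=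
  eventually_all.2 fun y => continuousAt_const.eventually_lt
    (show ContinuousAt (fun t : ℝ => p y + t * w y) 0 by fun_prop) (by simpa using hp y)

theorem sum_add_mul_eq_one {p w : S → ℝ} (hp : ∑ y, p y = 1) (hw : ∑ y, w y = 0) (t : ℝ) :
    ∑ y, (p y + t * w y) = 1 := by
  rw [sum_add_distrib, ← mul_sum, hw, hp, mul_zero, add_zero]

theorem IsLocalMinOn.isLocalMin_add_mul {F : (S → ℝ) → ℝ} {p w : S → ℝ}
    (hmin : IsLocalMinOn F (posSimplex S) p) (hp : p ∈ posSimplex S) (hw : ∑ y, w y = 0) :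
    IsLocalMin (fun t : ℝ => F fun y => p y + t * w y) 0 := by
  have htend : Tendsto (fun t : ℝ => fun y => p y + t * w y) (𝓝 0) (𝓝[posSimplex S] p) :=
    tendsto_nhdsWithin_iff.2 ⟨Continuous.tendsto' (by fun_prop) _ _ (by simp),
      (eventually_forall_pos_add_mul hp.1 w).mono fun t ht => ⟨ht, sum_add_mul_eq_one hp.2 hw t⟩⟩
  exact IsMinFilter.comp_tendsto (g := fun t : ℝ => fun y => p y + t * w y)
    (by simp only [zero_mul, add_zero]; exact hmin) htend

theorem hasDerivAt_mul_log_sub (a : ℝ) {x : ℝ} (hx : 0 < x) :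
    HasDerivAt (fun x => x * (log x - a)) (log x - a + 1) x :=
  ((hasDerivAt_id' x).mul ((hasDerivAt_log hx.ne').sub_const a)).congr_deriv (by field_simp)

theorem hasDerivAt_mul_log_sub_sq (a : ℝ) {x : ℝ} (hx : 0 < x) :
    HasDerivAt (fun x => x * (log x - a) ^ 2) ((log x - a) ^ 2 + 2 * (log x - a)) x :=
  ((hasDerivAt_id' x).mul (((hasDerivAt_log hx.ne').sub_const a).pow 2)).congr_deriv
    (by simp only [Pi.pow_apply]; field_simp; ring)

theorem hasDerivAt_log_sub_sq_add (a : ℝ) {x : ℝ} (hx : 0 < x) :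
    HasDerivAt (fun x => (log x - a) ^ 2 + 2 * (log x - a)) ((2 * (log x - a) + 2) / x) x := by
  have hlog := (hasDerivAt_log hx.ne').sub_const a
  exact ((hlog.pow 2).add (hlog.const_mul 2)).congr_deriv (by field_simp; ring)

theorem hasDerivAt_sum_add_mul {f f' : S → ℝ → ℝ} {p w : S → ℝ} {t : ℝ}
    (hf : ∀ y, HasDerivAt (f y) (f' y (p y + t * w y)) (p y + t * w y)) :
    HasDerivAt (fun t => ∑ y, f y (p y + t * w y)) (∑ y, f' y (p y + t * w y) * w y) t :=
  HasDerivAt.fun_sum fun y _ => by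
    have := (hf y).comp t (((hasDerivAt_id t).mul_const (w y)).const_add (p y))
    rw [one_mul] at this
    exact this

theorem residualLoss_eq {p : S → ℝ} (hp : ∑ y, p y = 1) (c : S → ℝ) :
    residualLoss c p = 2 * (∑ y, p y * (log (p y) - c y) ^ 2
      - (∑ y, p y * (log (p y) - c y)) ^ 2) :=
  sum_sum_mul_mul_sub_sq hp fun y => log (p y) - c y

theorem IsLocalMinOn.isLocalMin_residualVariance_add_mul {c p w : S → ℝ}
    (hmin : IsLocalMinOn (residualLoss c) (posSimplex S) p) (hp : p ∈ posSimplex S)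
    (hw : ∑ y, w y = 0) :
    IsLocalMin (fun t => ∑ y, (p y + t * w y) * (log (p y + t * w y) - c y) ^ 2
      - (∑ y, (p y + t * w y) * (log (p y + t * w y) - c y)) ^ 2) 0 := by
  filter_upwards [hmin.isLocalMin_add_mul hp hw] with t ht
  rw [residualLoss_eq (sum_add_mul_eq_one hp.2 hw t),
    residualLoss_eq (sum_add_mul_eq_one hp.2 hw 0)] at ht
  linarith

theorem IsLocalMinOn.residualLoss_optimality {c p h : S → ℝ}
    (hmin : IsLocalMinOn (residualLoss c) (posSimplex S) p) (hp : p ∈ posSimplex S)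
    (hmean : ∑ y, p y * (log (p y) - c y) = 0) (hh : ∑ y, p y * h y = 0) :
    ∑ y, p y * h y * ((log (p y) - c y) ^ 2 + 2 * (log (p y) - c y)) = 0 ∧
    2 * (∑ y, p y * h y * (log (p y) - c y)) ^ 2
      ≤ ∑ y, p y * h y ^ 2 * (2 * (log (p y) - c y) + 2) := by
  set w : S → ℝ := fun y => p y * h y
  set φ : ℝ → ℝ := fun t => ∑ y, (p y + t * w y) * (log (p y + t * w y) - c y) ^ 2
      - (∑ y, (p y + t * w y) * (log (p y + t * w y) - c y)) ^ 2
  set φ' : ℝ → ℝ := fun t =>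
    ∑ y, ((log (p y + t * w y) - c y) ^ 2 + 2 * (log (p y + t * w y) - c y)) * w y
      - 2 * (∑ y, (p y + t * w y) * (log (p y + t * w y) - c y))
        * ∑ y, (log (p y + t * w y) - c y + 1) * w y
  have hM : ∀ t, (∀ y, 0 < p y + t * w y) → HasDerivAt
      (fun t => ∑ y, (p y + t * w y) * (log (p y + t * w y) - c y))
      (∑ y, (log (p y + t * w y) - c y + 1) * w y) t := fun t ht =>
    hasDerivAt_sum_add_mul (f := fun y x => x * (log x - c y))
      (f' := fun y x => log x - c y + 1) fun y =>
      hasDerivAt_mul_log_sub (c y) (ht y)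
  have hφmin : IsLocalMin φ 0 := hmin.isLocalMin_residualVariance_add_mul hp hh
  have hφ : ∀ᶠ t in 𝓝 0, HasDerivAt φ (φ' t) t := by
    filter_upwards [eventually_forall_pos_add_mul hp.1 w] with t ht
    have hA := hasDerivAt_sum_add_mul (f := fun y x => x * (log x - c y) ^ 2)
      (f' := fun y x => (log x - c y) ^ 2 + 2 * (log x - c y)) fun y =>
      hasDerivAt_mul_log_sub_sq (c y) (ht y)
    exact (hA.sub ((hM t ht).pow 2)).congr_deriv (by ring)
  have h0 : ∀ y, 0 < p y + 0 * w y := by simpa using hp.1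
  have hφ' := (hasDerivAt_sum_add_mul (f := fun y x => ((log x - c y) ^ 2 + 2 * (log x - c y)) * w y)
    (f' := fun y x => (2 * (log x - c y) + 2) / x * w y)
    fun y => (hasDerivAt_log_sub_sq_add (c y) (h0 y)).mul_const (w y)).sub
    (((hM 0 h0).const_mul 2).mul (hasDerivAt_sum_add_mul (f := fun y x => (log x - c y + 1) * w y)
      (f' := fun y x => x⁻¹ * w y)
      fun y => (((hasDerivAt_log (h0 y).ne').sub_const (c y)).add_const 1).mul_const (w y)))
  have hfirst := hφmin.hasDerivAt_eq_zero hφ.self_of_nhds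
  have hsecond := hφmin.nonneg_of_hasDerivAt_of_hasDerivAt hφ hφ'
  simp only [φ', zero_mul, add_zero, hmean] at hfirst hsecond
  have hlin : ∑ y, (log (p y) - c y + 1) * w y = ∑ y, p y * h y * (log (p y) - c y) := by
    simp only [add_mul, one_mul, sum_add_distrib, hh, add_zero]
    exact sum_congr rfl fun y _ => mul_comm _ _
  have hquad : ∑ y, (2 * (log (p y) - c y) + 2) / p y * w y * w y
      = ∑ y, p y * h y ^ 2 * (2 * (log (p y) - c y) + 2) :=
    sum_congr rfl fun y _ => by simp only [w]; field_simp [(hp.1 y).ne']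
  rw [hlin, hquad] at hsecond
  refine ⟨?_, by linarith⟩
  rw [← hfirst, mul_zero, zero_mul, sub_zero]
  exact sum_congr rfl fun y _ => mul_comm _ _

theorem eq_zero_of_optimality {p v : S → ℝ} (hp : p ∈ posSimplex S)
    (hmean : ∑ y, p y * v y = 0)
    (hfirst : ∀ h : S → ℝ, ∑ y, p y * h y = 0 → ∑ y, p y * h y * (v y ^ 2 + 2 * v y) = 0)
    (hsecond : ∀ h : S → ℝ, ∑ y, p y * h y = 0 →
      2 * (∑ y, p y * h y * v y) ^ 2 ≤ ∑ y, p y * h y ^ 2 * (2 * v y + 2)) :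
    v = 0 := by
  set K := ∑ y, p y * (v y ^ 2 + 2 * v y)
  have hK : ∀ y, v y ^ 2 + 2 * v y = K := by
    have hcentered : ∑ y, p y * (v y ^ 2 + 2 * v y - K) = 0 := by
      simp only [mul_sub, sum_sub_distrib, ← sum_mul, hp.2, one_mul, K, sub_self]
    have hsq : ∑ y, p y * (v y ^ 2 + 2 * v y - K) ^ 2 = 0 :=
      calc ∑ y, p y * (v y ^ 2 + 2 * v y - K) ^ 2
          = ∑ y, p y * (v y ^ 2 + 2 * v y - K) * (v y ^ 2 + 2 * v y)
            - K * ∑ y, p y * (v y ^ 2 + 2 * v y - K) := by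
            rw [mul_sum, ← sum_sub_distrib]
            exact sum_congr rfl fun y _ => by ring
        _ = 0 := by rw [hfirst _ hcentered, hcentered, mul_zero, sub_zero]
    exact fun y => sub_eq_zero.1 (eq_zero_of_sum_mul_sq_eq_zero hp.1 hsq y)
  -- on the level set `v² + 2v = K`, the cubic term of the second variation collapses
  have hcubic : ∑ y, p y * v y ^ 2 * (2 * v y + 2) = -2 * ∑ y, p y * v y ^ 2 := by
    calc ∑ y, p y * v y ^ 2 * (2 * v y + 2)
        = ∑ y, (2 * K * (p y * v y) - 2 * (p y * v y ^ 2)) :=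
          sum_congr rfl fun y _ => by linear_combination 2 * p y * v y * hK y
      _ = -2 * ∑ y, p y * v y ^ 2 := by
          rw [sum_sub_distrib, ← mul_sum, ← mul_sum, hmean]; ring
  have hvar : ∑ y, p y * v y ^ 2 = 0 := by
    have h2 := hsecond v hmean
    rw [hcubic] at h2
    have hnn : 0 ≤ ∑ y, p y * v y ^ 2 :=
      sum_nonneg fun y _ => mul_nonneg (hp.1 y).le (sq_nonneg _)
    nlinarith [sq_nonneg (∑ y, p y * v y * v y)]
  exact funext (eq_zero_of_sum_mul_sq_eq_zero hp.1 hvar)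

theorem IsLocalMinOn.log_sub_eq_of_residualLoss {c p : S → ℝ}
    (hmin : IsLocalMinOn (residualLoss c) (posSimplex S) p) (hp : p ∈ posSimplex S) (y y' : S) :
    log (p y) - c y = log (p y') - c y' := by
  set B := ∑ y, p y * (log (p y) - c y)
  have hmin' : IsLocalMinOn (residualLoss fun y => c y + B) (posSimplex S) p := by
    rwa [residualLoss_add_const]
  have hmean : ∑ y, p y * (log (p y) - (c y + B)) = 0 := by
    simp only [← sub_sub, mul_sub, sum_sub_distrib, ← sum_mul, hp.2, one_mul, B, sub_self]
  have hv := eq_zero_of_optimality hp hmean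
    (fun h hh => (hmin'.residualLoss_optimality hp hmean hh).1)
    (fun h hh => (hmin'.residualLoss_optimality hp hmean hh).2)
  have hy := congrFun hv y
  have hy' := congrFun hv y'
  simp only [Pi.zero_apply] at hy hy'
  linarith

theorem sum_sum_log_ratio_eq_residualLoss {πref : S → ℝ} (hπref : ∀ y, 0 < πref y)
    (g : S → ℝ) (τ : ℝ) (p : S → ℝ) :
    ∑ y, ∑ y', p y * p y' * (log (p y * πref y' / (p y' * πref y)) - (g y - g y') / τ) ^ 2
      = residualLoss (fun y => log (πref y) + g y / τ) p := by
  refine sum_congr rfl fun y _ => sum_congr rfl fun y' _ => ?_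
  rcases eq_or_ne (p y) 0 with hy | hy
  · simp [hy]
  rcases eq_or_ne (p y') 0 with hy' | hy'
  · simp [hy']
  rw [log_div (mul_ne_zero hy (hπref y').ne') (mul_ne_zero hy' (hπref y).ne'),
    log_mul hy (hπref y').ne', log_mul hy' (hπref y).ne']
  ring

end

theorem bfpo_stmt13_general {S : Type*} [Fintype S] [Nonempty S]
    (πref : S → ℝ) (hrefpos : ∀ y, 0 < πref y)
    (τ : ℝ) (g : S → ℝ)
    (L : (S → ℝ) → ℝ)
    (hL : ∀ p : S → ℝ, L p = ∑ y, ∑ y', p y * p y' *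
      (Real.log (p y * πref y' / (p y' * πref y)) - (g y - g y') / τ) ^ 2)
    (πstar : S → ℝ)
    (hπstar : ∀ y, πstar y =
      πref y * Real.exp (g y / τ) / ∑ y', πref y' * Real.exp (g y' / τ))
    (Δ : Set (S → ℝ))
    (hΔ : Δ = {p : S → ℝ | (∀ y, 0 < p y) ∧ (∑ y, p y) = 1}) :
    πstar ∈ Δ ∧
    (∀ π ∈ Δ, L πstar ≤ L π) ∧
    (∀ π ∈ Δ, L π = L πstar → π = πstar) ∧
    (∀ π ∈ Δ, IsLocalMinOn L Δ π → π = πstar) := by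
  set c : S → ℝ := fun y => Real.log (πref y) + g y / τ
  obtain rfl : L = residualLoss c :=
    funext fun p => (hL p).trans (sum_sum_log_ratio_eq_residualLoss hrefpos g τ p)
  obtain rfl : πstar = gibbs c := funext fun y => by
    simp only [hπstar, gibbs, c, Real.exp_add, Real.exp_log (hrefpos _)]
  obtain rfl : Δ = posSimplex S := hΔ
  have hstar := gibbs_mem_posSimplex c
  have hconst : ∀ y y', Real.log (gibbs c y) - c y = Real.log (gibbs c y') - c y' := by
    simp only [log_gibbs_sub, implies_true]
  have hLstar : residualLoss c (gibbs c) = 0 := (residualLoss_eq_zero_iff c hstar.1).2 hconst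
  refine ⟨hstar, fun π hπ => ?_, fun π hπ hLπ => ?_, fun π hπ hmin => ?_⟩
  · exact hLstar ▸ residualLoss_nonneg c fun y => (hπ.1 y).le
  · exact eq_of_log_sub_eq hπ hstar ((residualLoss_eq_zero_iff c hπ.1).1 (hLπ.trans hLstar)) hconst
  · exact eq_of_log_sub_eq hπ hstar (hmin.log_sub_eq_of_residualLoss hπ) hconst

/-- Over full-support distributions `π` on the finite set `S`, the loss
`L π = E_{y,y'∼π⊗π}[(h_π(y,y') − (g y − g y')/τ)²]` has
`π* (y) ∝ π_ref y · exp (g y / τ)` as its unique global minimizer, and no other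
local minima exist. -/
theorem bfpo_stmt13 {S : Type*} [Fintype S] [Nonempty S]
    (πref : S → ℝ) (hrefpos : ∀ y, 0 < πref y) (href1 : ∑ y, πref y = 1)
    (τ : ℝ) (hτ : 0 < τ) (g : S → ℝ)
    (L : (S → ℝ) → ℝ)
    (hL : ∀ p : S → ℝ, L p = ∑ y, ∑ y', p y * p y' *
      (Real.log (p y * πref y' / (p y' * πref y)) - (g y - g y') / τ) ^ 2)
    (πstar : S → ℝ)
    (hπstar : ∀ y, πstar y =
      πref y * Real.exp (g y / τ) / ∑ y', πref y' * Real.exp (g y' / τ))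
    (Δ : Set (S → ℝ))
    (hΔ : Δ = {p : S → ℝ | (∀ y, 0 < p y) ∧ (∑ y, p y) = 1}) :
    πstar ∈ Δ ∧
    (∀ π ∈ Δ, L πstar ≤ L π) ∧
    (∀ π ∈ Δ, L π = L πstar → π = πstar) ∧
    (∀ π ∈ Δ, IsLocalMinOn L Δ π → π = πstar) :=
  bfpo_stmt13_general πref hrefpos τ g L hL πstar hπstar Δ hΔ
end
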